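/- Fix ℏ ∈ ℂ with ℏ ≠ 0 and N ∈ ℂ. For every j ∈ ℤ the identity (1/ℏ)·(f_j(u) − f_{j+1}(u)) = u·( ((2(j−N)−1)/4)·f_j(u) + (u/2)·f_j'(u) ) holds in ℂ[[u]]. Equivalently, the Kac–Schwarz operator a = (λ/2)·d/dλ + λ/ℏ − 1/4 acts on the basis vectors by a·Φ_j^{(N)} = (j−1−N/2)·Φ_j^{(N)} + (1/ℏ)·Φ_{j+1}^{(N)}; in terms of coefficients this is the identity a_k(x+1) − a_k(x) = 4·k·(2x+2k−3)·a_{k−1}(x), valid for all integers k ≥ 1 and all x ∈ ℂ. -/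

import Mathlib

noncomputable section

namespace BGWKS

/-- Formal derivative of a one-variable formal power series. -/
def d (g : PowerSeries ℂ) : PowerSeries ℂ := PowerSeries.derivative ℂ g

/-- `a_k(x) = Π_{i=1}^{k} (4(x−1)² − (2i−1)²)`, with `a_0(x) = 1`. -/
def aP (k : ℕ) (x : ℂ) : ℂ := ∏ i ∈ Finset.range k, (4*(x-1)^2 - ((2*i+1 : ℕ) : ℂ)^2)

/-- The series `f_j(u) = Σ_k ((−ℏ)^k·a_k(j−N)/(16^k·k!))·u^k` encoding the basis vector
`Φ_j^{(N)}(λ) = λ^{j−1}·f_j(1/λ)` of the generalized BGW point of the Sato Grassmannian. -/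
def f (ℏ N : ℂ) (j : ℤ) : PowerSeries ℂ :=
  PowerSeries.mk fun k => (-ℏ)^k * aP k ((j : ℂ) - N) / (16^k * (Nat.factorial k : ℂ))

end BGWKS

open BGWKS

/-!
The `i`-th factor of `a_k(x)` splits as `(2x − 2i − 3)(2x + 2i − 1)`, so the shift `x ↦ x + 1`
moves every factor one step along the product and `a_{k+1}(x+1) = a_k(x)·((2x+2k)² − 1)`.
Subtracting `a_{k+1}(x) = a_k(x)·(2x−2k−3)(2x+2k−1)` gives the coefficient identity; divided by
`16^{k+1}(k+1)!` it is the series identity read coefficientwise, `u·f_j'` contributing the factor `k`.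
-/

theorem PowerSeries.coeff_X_mul_derivative {R : Type*} [CommSemiring R] (g : PowerSeries R)
    (n : ℕ) : coeff n (X * derivative R g) = n * coeff n g := by
  cases n with
  | zero => simp
  | succ n => rw [coeff_succ_X_mul, coeff_derivative, mul_comm]; push_cast; rfl

namespace BGWKS

open PowerSeries

theorem aP_zero (x : ℂ) : aP 0 x = 1 := Finset.prod_range_zero _

theorem aP_succ (k : ℕ) (x : ℂ) :
    aP (k+1) x = aP k x * (4*(x-1)^2 - (2*k+1)^2) := by
  simp only [aP, Finset.prod_range_succ]
  push_cast
  rfl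

theorem aP_succ_add_one (k : ℕ) (x : ℂ) :
    aP (k+1) (x+1) = aP k x * ((2*x+2*k)^2 - 1) := by
  induction k with
  | zero => rw [aP_succ, aP_zero, aP_zero]; ring
  | succ k ih =>
    rw [aP_succ (k+1), ih, aP_succ k x]
    push_cast
    ring

theorem aP_succ_add_one_sub (k : ℕ) (x : ℂ) :
    aP (k+1) (x+1) - aP (k+1) x = 4*(k+1)*(2*x+2*k-1) * aP k x := by
  rw [aP_succ_add_one, aP_succ]
  ring

theorem coeff_succ_f_add_one_sub (ℏ N : ℂ) (j : ℤ) (k : ℕ) :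
    coeff (k+1) (f ℏ N (j+1)) - coeff (k+1) (f ℏ N j) =
      -ℏ * ((2*((j : ℂ) - N) + 2*k - 1)/4) * coeff k (f ℏ N j) := by
  have hshift : ((j + 1 : ℤ) : ℂ) - N = ((j : ℂ) - N) + 1 := by push_cast; ring
  simp only [f, coeff_mk, hshift]
  rw [← sub_div, ← mul_sub, aP_succ_add_one_sub, Nat.factorial_succ]
  push_cast
  field_simp
  ring

end BGWKS

/-- the Kac–Schwarz operator `a = (λ/2)·d/dλ + λ/ℏ − 1/4` acts on the basis
vectors by `a·Φ_j^{(N)} = (j−1−N/2)·Φ_j^{(N)} + (1/ℏ)·Φ_{j+1}^{(N)}`, i.e.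
`(1/ℏ)·(f_j − f_{j+1}) = u·( ((2(j−N)−1)/4)·f_j + (u/2)·f_j' )`; in terms of coefficients
this is `a_k(x+1) − a_k(x) = 4·k·(2x+2k−3)·a_{k−1}(x)` for `k ≥ 1`. -/
theorem kac_schwarz_a_action (ℏ N : ℂ) (hℏ : ℏ ≠ 0) :
    (∀ j : ℤ, ℏ⁻¹ • (f ℏ N j - f ℏ N (j+1)) =
      PowerSeries.X * (((2*((j : ℂ) - N) - 1)/4) • f ℏ N j
        + (1/2 : ℂ) • (PowerSeries.X * d (f ℏ N j)))) ∧
    (∀ k : ℕ, 1 ≤ k → ∀ x : ℂ,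
      aP k (x+1) - aP k x = 4*(k : ℂ)*(2*x + 2*(k : ℂ) - 3)*aP (k-1) x) := by
  refine ⟨fun j => PowerSeries.ext fun n => ?_, fun k hk x => ?_⟩
  · cases n with
    | zero => simp [f, aP_zero]
    | succ n =>
      have hstep := coeff_succ_f_add_one_sub ℏ N j n
      rw [PowerSeries.coeff_succ_X_mul]
      simp only [map_smul, map_sub, map_add, smul_eq_mul, d, PowerSeries.coeff_X_mul_derivative]
      field_simp
      linear_combination (-8) * hstep
  · obtain ⟨k, rfl⟩ := Nat.exists_eq_add_of_le' hk
    rw [Nat.add_sub_cancel, aP_succ_add_one_sub]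
    push_cast
    ring
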